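/- arXiv:2602.05095 — 2 statements merged into one kernel-verified Lean document; each statement's English description precedes it below -/
import Mathlib

section
/- Fix S ⊆ {0,...,9} and z ≥ 5. Then Q_S(X) = Q_S(X;z) + O((|S|+1)(X/z + √X)), with an absolute implied constant, where Q_S(X) counts n ≤ X with n and 10n+d square-free for all d ∈ S, and Q_S(X;z) counts n ≤ X avoiding the bad residues B_p(S) mod p² for all primes p ≤ z. -/
/-!
An `n ≤ X` counted by `Q_S(X; z)` but not by `Q_S(X)` has `n mod p² ∈ B_p(S)` for some prime
`p > z`, and `p² ≤ 10n + 9` forces `p ≤ 10X + 9`. For each `p` at most `(|S| + 1)(10X + 9)/p²`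
integers `n ≤ X` have `n mod p² ∈ B_p(S)`, and `∑_{p > z} 1/p² ≤ 1/z`.
-/

open Finset

/-- `Q_S(X)` : the number of `1 ≤ n ≤ X` with `n` and all `10n+d` (`d ∈ S`) squarefree. -/
def Q (S : Finset ℕ) (X : ℕ) : ℕ :=
  ((Finset.Icc 1 X).filter
    (fun n => Squarefree n ∧ ∀ d ∈ S, Squarefree (10 * n + d))).card

/-- `Q_S(X; z)`: the number of `1 ≤ n ≤ X` avoiding all bad residues mod `p²` for primes `p ≤ z`. -/
def Qz (S : Finset ℕ) (X z : ℕ) : ℕ :=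
  ((Finset.Icc 1 X).filter
    (fun n => ∀ p ≤ z, p.Prime → ¬(p ^ 2 ∣ n ∨ ∃ d ∈ S, p ^ 2 ∣ (10 * n + d)))).card

theorem sum_Ioc_inv_sq_le_inv {α : Type*} [Field α] [LinearOrder α] [IsStrictOrderedRing α]
    {k : ℕ} (hk : k ≠ 0) (n : ℕ) : ∑ i ∈ Ioc k n, ((i : α) ^ 2)⁻¹ ≤ (k : α)⁻¹ := by
  rcases le_or_gt k n with hkn | hnk
  · linarith [sum_Ioc_inv_sq_le_sub (α := α) hk hkn, inv_nonneg.mpr (n.cast_nonneg (α := α))]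
  · simp [Ioc_eq_empty_of_le hnk.le]

theorem card_filter_dvd_mul_add_le {a : ℕ} (ha : 0 < a) (m d X : ℕ) :
    #{n ∈ Icc 1 X | m ∣ a * n + d} ≤ (a * X + d) / m := by
  rw [← Nat.Ioc_filter_dvd_card_eq_div]
  refine card_le_card_of_injOn (fun n => a * n + d) ?_ ?_
  · intro n hn
    simp only [coe_filter, mem_Icc, Set.mem_ofPred_eq, mem_Ioc] at hn ⊢
    have := Nat.mul_le_mul_left a hn.1.1
    exact ⟨⟨by omega, by gcongr; exact hn.1.2⟩, hn.2⟩
  · intro x _ y _ hxy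
    simpa [ha.ne'] using hxy

/-- `IsBad S p n` says that `n mod p²` lies in `B_p(S)`. -/
def IsBad (S : Finset ℕ) (p n : ℕ) : Prop :=
  p ^ 2 ∣ n ∨ ∃ d ∈ S, p ^ 2 ∣ 10 * n + d

instance (S : Finset ℕ) (p : ℕ) : DecidablePred (IsBad S p) := fun _ => by
  unfold IsBad; infer_instance

theorem squarefree_and_forall_iff_forall_not_isBad {S : Finset ℕ} {n : ℕ} :
    (Squarefree n ∧ ∀ d ∈ S, Squarefree (10 * n + d)) ↔
      ∀ p, p.Prime → ¬IsBad S p n := by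
  simp only [Nat.squarefree_iff_prime_squarefree, IsBad, sq]
  constructor
  · rintro ⟨hn, hS⟩ p hp (hpn | ⟨d, hd, hpd⟩)
    exacts [hn p hp hpn, hS d hd p hp hpd]
  · intro h
    exact ⟨fun p hp hpn => h p hp (.inl hpn),
      fun d hd p hp hpd => h p hp (.inr ⟨d, hd, hpd⟩)⟩

theorem filter_squarefree_subset_filter_not_isBad (S : Finset ℕ) (X z : ℕ) :
    {n ∈ Icc 1 X | Squarefree n ∧ ∀ d ∈ S, Squarefree (10 * n + d)} ⊆
      {n ∈ Icc 1 X | ∀ p ≤ z, p.Prime → ¬IsBad S p n} :=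
  monotone_filter_right _ fun _ _ h p _ => squarefree_and_forall_iff_forall_not_isBad.mp h p

theorem Qz_eq_card_filter (S : Finset ℕ) (X z : ℕ) :
    Qz S X z = #{n ∈ Icc 1 X | ∀ p ≤ z, p.Prime → ¬IsBad S p n} :=
  rfl

theorem Q_le_Qz (S : Finset ℕ) (X z : ℕ) : Q S X ≤ Qz S X z :=
  card_le_card (filter_squarefree_subset_filter_not_isBad S X z)

theorem sq_le_of_isBad {S : Finset ℕ} (hS : S ⊆ range 10) {p n : ℕ} (hn : 0 < n)
    (h : IsBad S p n) : p ^ 2 ≤ 10 * n + 9 := by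
  rcases h with hpn | ⟨d, hd, hpd⟩
  · have := Nat.le_of_dvd hn hpn
    omega
  · have := Nat.le_of_dvd (by omega) hpd
    have := mem_range.mp (hS hd)
    omega

theorem card_filter_isBad_le {S : Finset ℕ} (hS : S ⊆ range 10) (p X : ℕ) :
    #{n ∈ Icc 1 X | IsBad S p n} ≤ (S.card + 1) * ((10 * X + 9) / p ^ 2) := by
  have hunion : {n ∈ Icc 1 X | IsBad S p n} ⊆
      {n ∈ Icc 1 X | p ^ 2 ∣ n} ∪
        S.biUnion fun d => {n ∈ Icc 1 X | p ^ 2 ∣ 10 * n + d} := by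
    intro n hn
    rcases mem_filter.mp hn with ⟨hnX, hpn | ⟨d, hd, hpd⟩⟩
    · exact mem_union_left _ (mem_filter.mpr ⟨hnX, hpn⟩)
    · exact mem_union_right _ (mem_biUnion.mpr ⟨d, hd, mem_filter.mpr ⟨hnX, hpd⟩⟩)
  have hdiv : ∀ d ∈ S, (10 * X + d) / p ^ 2 ≤ (10 * X + 9) / p ^ 2 := fun d hd =>
    Nat.div_le_div_right (by have := mem_range.mp (hS hd); omega)
  calc #{n ∈ Icc 1 X | IsBad S p n}
      ≤ #{n ∈ Icc 1 X | p ^ 2 ∣ n} + ∑ d ∈ S, #{n ∈ Icc 1 X | p ^ 2 ∣ 10 * n + d} :=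
        (card_le_card hunion).trans <|
          (card_union_le _ _).trans <| Nat.add_le_add_left card_biUnion_le _
    _ ≤ X / p ^ 2 + ∑ d ∈ S, (10 * X + d) / p ^ 2 :=
        add_le_add (by simpa using card_filter_dvd_mul_add_le one_pos (p ^ 2) 0 X) <|
          sum_le_sum fun d _ => card_filter_dvd_mul_add_le (by norm_num) _ _ _
    _ ≤ (10 * X + 9) / p ^ 2 + ∑ _d ∈ S, (10 * X + 9) / p ^ 2 :=
        add_le_add (Nat.div_le_div_right (by omega)) (sum_le_sum hdiv)
    _ = (S.card + 1) * ((10 * X + 9) / p ^ 2) := by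
        rw [sum_const, smul_eq_mul]
        ring

theorem Qz_sub_Q_le_sum {S : Finset ℕ} (hS : S ⊆ range 10) (X z : ℕ) :
    Qz S X z - Q S X ≤ ∑ p ∈ Ioc z (10 * X + 9), #{n ∈ Icc 1 X | IsBad S p n} := by
  rw [Q, Qz_eq_card_filter,
    ← card_sdiff_of_subset (filter_squarefree_subset_filter_not_isBad S X z)]
  refine (card_le_card fun n hn => ?_).trans card_biUnion_le
  simp only [mem_sdiff, mem_filter, squarefree_and_forall_iff_forall_not_isBad, not_and,
    not_forall, not_not] at hn
  obtain ⟨⟨hnX, hsmall⟩, hbad⟩ := hn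
  obtain ⟨p, hp, hpn⟩ := hbad hnX
  have hzp : z < p := lt_of_not_ge fun hpz => hsmall p hpz hp hpn
  have hpX : p ≤ 10 * X + 9 := by
    obtain ⟨hn, hnX⟩ := mem_Icc.mp hnX
    have := sq_le_of_isBad hS hn hpn
    have := Nat.le_self_pow two_ne_zero p
    omega
  exact mem_biUnion.mpr ⟨p, mem_Ioc.mpr ⟨hzp, hpX⟩, mem_filter.mpr ⟨hnX, hpn⟩⟩

theorem Qz_sub_Q_le {S : Finset ℕ} (hS : S ⊆ range 10) {z : ℕ} (hz : z ≠ 0) (X : ℕ) :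
    ((Qz S X z - Q S X : ℕ) : ℝ) ≤ (S.card + 1) * (10 * X + 9) / z := by
  have hterm (p : ℕ) : (#{n ∈ Icc 1 X | IsBad S p n} : ℝ) ≤
      (S.card + 1) * (10 * X + 9) * ((p : ℝ) ^ 2)⁻¹ := by
    calc (#{n ∈ Icc 1 X | IsBad S p n} : ℝ)
        ≤ (S.card + 1) * (((10 * X + 9) / p ^ 2 : ℕ) : ℝ) := by
          exact_mod_cast card_filter_isBad_le hS p X
      _ ≤ (S.card + 1) * (((10 * X + 9 : ℕ) : ℝ) / ((p ^ 2 : ℕ) : ℝ)) := by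
          gcongr
          exact Nat.cast_div_le
      _ = (S.card + 1) * (10 * X + 9) * ((p : ℝ) ^ 2)⁻¹ := by
          push_cast
          ring
  calc ((Qz S X z - Q S X : ℕ) : ℝ)
      ≤ ∑ p ∈ Ioc z (10 * X + 9), (#{n ∈ Icc 1 X | IsBad S p n} : ℝ) := by
        exact_mod_cast Qz_sub_Q_le_sum hS X z
    _ ≤ ∑ p ∈ Ioc z (10 * X + 9), (S.card + 1) * (10 * X + 9) * ((p : ℝ) ^ 2)⁻¹ :=
        sum_le_sum fun p _ => hterm p
    _ ≤ (S.card + 1) * (10 * X + 9) * (z : ℝ)⁻¹ := by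
        rw [← mul_sum]
        gcongr
        exact sum_Ioc_inv_sq_le_inv hz _
    _ = (S.card + 1) * (10 * X + 9) / z := (div_eq_mul_inv _ _).symm

theorem stmt_5 :
    ∃ C : ℝ, 0 < C ∧ ∀ S ⊆ Finset.range 10, ∀ z ≥ 5, ∀ X : ℕ,
      |(Q S X : ℝ) - (Qz S X z : ℝ)| ≤
        C * ((S.card : ℝ) + 1) * ((X : ℝ) / (z : ℝ) + Real.sqrt X) := by
  refine ⟨19, by norm_num, fun S hS z hz X => ?_⟩
  rcases Nat.eq_zero_or_pos X with rfl | hX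
  · simp [Q, Qz]
  have hQ := Q_le_Qz S X z
  have hXR : (1 : ℝ) ≤ X := by exact_mod_cast hX
  rw [abs_sub_comm, abs_of_nonneg (sub_nonneg.mpr (by exact_mod_cast hQ)), ← Nat.cast_sub hQ]
  have hc : (0 : ℝ) ≤ S.card := S.card.cast_nonneg
  calc ((Qz S X z - Q S X : ℕ) : ℝ)
      ≤ (S.card + 1) * (10 * X + 9) / z := Qz_sub_Q_le hS (by omega) X
    _ ≤ 19 * (S.card + 1) * X / z := div_le_div_of_nonneg_right (by nlinarith) z.cast_nonneg
    _ ≤ 19 * (S.card + 1) * (X / z + √X) := by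
        rw [mul_div_assoc]
        gcongr
        exact le_add_of_nonneg_right (Real.sqrt_nonneg _)
end

section
/- Let p ≥ 7 be prime and S ⊆ {0,...,9}. Then 10 is invertible modulo p² and ν_p(S) = 1 + |S| - [0 ∈ S], where [0 ∈ S] is 1 if 0 ∈ S and 0 otherwise. -/
open Finset

/-- `ν p S` : the number of residues `n mod p²` with `p² ∣ n` or `p² ∣ 10n+d` for some `d ∈ S`. -/
def nu (p : ℕ) (S : Finset ℕ) : ℕ :=
  ((Finset.range (p ^ 2)).filter
    (fun n => p ^ 2 ∣ n ∨ ∃ d ∈ S, p ^ 2 ∣ (10 * n + d))).card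

theorem stmt_11 (p : ℕ) (hp : p.Prime) (hp7 : 7 ≤ p)
    (S : Finset ℕ) (hS : S ⊆ Finset.range 10) :
    IsUnit (10 : ZMod (p ^ 2)) ∧
    nu p S = 1 + S.card - (if 0 ∈ S then 1 else 0) := by
  have hm : 10 < p ^ 2 := by nlinarith
  haveI : NeZero (p ^ 2) := ⟨by positivity⟩
  have hndvd : ¬ p ∣ 10 := by
    intro h
    have h10 := Nat.le_of_dvd (by norm_num) h
    interval_cases p <;> revert hp h <;> decide
  have hcop : Nat.Coprime 10 (p ^ 2) :=
    Nat.Coprime.pow_right _ ((hp.coprime_iff_not_dvd.mpr hndvd).symm)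
  have h10 : IsUnit (10 : ZMod (p ^ 2)) := by
    have := (ZMod.isUnit_iff_coprime 10 (p ^ 2)).mpr hcop
    simpa using this
  refine ⟨h10, ?_⟩
  set m := p ^ 2 with hmdef
  set f : ℕ → ZMod m := fun d => -(d : ZMod m) * (10 : ZMod m)⁻¹ with hf
  have hmul : (10 : ZMod m) * (10 : ZMod m)⁻¹ = 1 := ZMod.mul_inv_of_unit _ h10
  have key : ∀ (a : ZMod m) (d : ℕ), (10 * a + (d : ZMod m) = 0) ↔ a = f d := by
    intro a d
    constructor
    · intro h
      have h2 : (10 : ZMod m) * a = -(d : ZMod m) := by linear_combination h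
      calc a = (10 : ZMod m) * a * (10 : ZMod m)⁻¹ := by
              rw [mul_comm (10 : ZMod m) a, mul_assoc, hmul, mul_one]
        _ = f d := by rw [h2, hf]
    · intro h
      subst h
      simp only [hf]
      calc (10 : ZMod m) * (-(d : ZMod m) * (10 : ZMod m)⁻¹) + (d : ZMod m)
          = -(d : ZMod m) * ((10 : ZMod m) * (10 : ZMod m)⁻¹) + (d : ZMod m) := by ring
        _ = 0 := by rw [hmul]; ring
  have hcastinj : ∀ d e : ℕ, d < 10 → e < 10 → (d : ZMod m) = (e : ZMod m) → d = e := by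
    intro d e hd he h
    have := congrArg ZMod.val h
    rwa [ZMod.val_cast_of_lt (lt_trans hd hm), ZMod.val_cast_of_lt (lt_trans he hm)] at this
  have hfd : ∀ d : ℕ, (d : ZMod m) = -(10 * f d) := by
    intro d
    have := (key (f d) d).mpr rfl
    linear_combination this
  set T : Finset (ZMod m) := insert 0 (S.image f) with hT
  have hset : (Finset.range m).filter
      (fun n => m ∣ n ∨ ∃ d ∈ S, m ∣ (10 * n + d)) = T.image ZMod.val := by
    ext n
    simp only [mem_filter, mem_range, mem_image, mem_insert, hT]
    constructor
    · rintro ⟨hn, h | ⟨d, hd, hdvd⟩⟩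
      · have hn0 : n = 0 := Nat.eq_zero_of_dvd_of_lt h hn
        exact ⟨0, Or.inl rfl, by simp [hn0]⟩
      · refine ⟨f d, Or.inr ⟨d, hd, rfl⟩, ?_⟩
        have h0 : ((10 * n + d : ℕ) : ZMod m) = 0 :=
          (ZMod.natCast_eq_zero_iff _ _).mpr hdvd
        push_cast at h0
        have heq := (key (n : ZMod m) d).mp h0
        rw [← heq, ZMod.val_cast_of_lt hn]
    · rintro ⟨x, hx, rfl⟩
      refine ⟨ZMod.val_lt x, ?_⟩
      rcases hx with rfl | ⟨d, hd, rfl⟩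
      · left; simp
      · right; refine ⟨d, hd, ?_⟩
        rw [← ZMod.natCast_eq_zero_iff]
        push_cast
        rw [ZMod.natCast_val, ZMod.cast_id]
        exact (key (f d) d).mpr rfl
  have himg : (S.image f).card = S.card := by
    apply Finset.card_image_of_injOn
    intro d hd e he h
    exact hcastinj d e (mem_range.mp (hS hd)) (mem_range.mp (hS he))
      (by rw [hfd d, hfd e, h])
  have h0mem : (0 : ZMod m) ∈ S.image f ↔ 0 ∈ S := by
    simp only [mem_image]
    constructor
    · rintro ⟨d, hd, h⟩
      have hd0 : (d : ZMod m) = 0 := by rw [hfd d, h]; ring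
      have := hcastinj d 0 (mem_range.mp (hS hd)) (by norm_num) (by simpa using hd0)
      rwa [this] at hd
    · intro h0
      exact ⟨0, h0, by simp [hf]⟩
  have hnu : nu p S = T.card := by
    unfold nu
    rw [show (p ^ 2) = m from rfl, hset,
      Finset.card_image_of_injective _ (ZMod.val_injective m)]
  by_cases h0 : 0 ∈ S
  · have hScard : 1 ≤ S.card := Finset.card_pos.mpr ⟨0, h0⟩
    rw [hnu, hT, Finset.insert_eq_self.mpr (h0mem.mpr h0), himg]
    rw [if_pos h0]
    omega
  · rw [hnu, hT, Finset.card_insert_of_notMem (fun h => h0 (h0mem.mp h)), himg]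
    rw [if_neg h0]
    omega
end
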